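/- Let ρ be a 2-representation of (μ : 𝔤 → 𝔥, L) on φ : W → V, and let (ω, α, φ̃) with ω ∈ Λ²𝔥* ⊗ V, α ∈ 𝔥* ⊗ 𝔤* ⊗ W, φ̃ ∈ 𝔤* ⊗ V satisfy the six cocycle equations (i)–(vi) of the paper. Then the map ε : 𝔤 ⊕ W → 𝔥 ⊕ V, ε(x,w) = (μ(x), φ(w) + φ̃(x)), is a Lie algebra homomorphism from the twisted semi-direct sum 𝔤 ⊕^{ω₁} W (with bracket [(x₀,w₀),(x₁,w₁)] = ([x₀,x₁], ρ₀¹(μ(x₀))w₁ − ρ₀¹(μ(x₁))w₀ − ω₁(x₀,x₁)), where ω₁(x₀,x₁) := ρ₁(x₁)φ̃(x₀) + α(μ(x₀); x₁)) to the twisted semi-direct sum 𝔥 ⊕^ω V (with bracket [(y₀,v₀),(y₁,v₁)] = ([y₀,y₁], ρ₀⁰(y₀)v₁ − ρ₀⁰(y₁)v₀ − ω(y₀,y₁))). -/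

import Mathlib

attribute [local instance 100] LieRing.ofAssociativeRing

/-- The twisted cocycle ω₁(x₀,x₁) := ρ₁(x₁)φ̃(x₀) + α(μ(x₀); x₁). -/
def omegaOne
    (K : Type*) [Field K]
    (g h W V : Type*) [LieRing g] [LieAlgebra K g] [LieRing h] [LieAlgebra K h]
    [AddCommGroup W] [Module K W] [AddCommGroup V] [Module K V]
    (μ : g →ₗ⁅K⁆ h) (ρ1 : g →ₗ[K] V →ₗ[K] W)
    (α : h →ₗ[K] g →ₗ[K] W) (φt : g →ₗ[K] V) (x₀ x₁ : g) : W :=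
  ρ1 x₁ (φt x₀) + α (μ x₀) x₁

/-!
The 𝔥-component of ε is μ, a Lie map. In the V-component, φ intertwines ρ₀¹ and ρ₀⁰, so the
terms in w₀, w₁ match. For the rest, equation (iv) at y = μ x₀, rewritten with the Peiffer
identity L_{μ x₀} = ad x₀ and with ρ₀⁰(μ x₁) = φ ρ₁(x₁), says that φ ∘ ω₁ differs from
ω ∘ (μ × μ) exactly by the terms ρ₀⁰(μ x₁)φ̃(x₀) − ρ₀⁰(μ x₀)φ̃(x₁) + φ̃⁅x₀, x₁⁆ coming from φ̃.
-/

theorem map_omegaOne {K : Type*} [Field K]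
    {g h W V : Type*} [LieRing g] [LieAlgebra K g] [LieRing h] [LieAlgebra K h]
    [AddCommGroup W] [Module K W] [AddCommGroup V] [Module K V]
    {φ : W →ₗ[K] V} {μ : g →ₗ⁅K⁆ h} {L : h →ₗ⁅K⁆ Module.End K g}
    {ρ00 : h →ₗ⁅K⁆ Module.End K V} {ρ1 : g →ₗ[K] V →ₗ[K] W}
    {ω : h →ₗ[K] h →ₗ[K] V} {α : h →ₗ[K] g →ₗ[K] W} {φt : g →ₗ[K] V}
    (hpeiffer : ∀ (x₀ x₁ : g), L (μ x₀) x₁ = ⁅x₀, x₁⁆)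
    (h00μ : ∀ x : g, (ρ00 (μ x) : V →ₗ[K] V) = φ ∘ₗ ρ1 x)
    (heq4 : ∀ (y : h) (x : g), ω y (μ x) = φ (α y x) + ρ00 y (φt x) - φt (L y x))
    (x₀ x₁ : g) :
    φ (omegaOne K g h W V μ ρ1 α φt x₀ x₁) =
      ρ00 (μ x₁) (φt x₀) - ρ00 (μ x₀) (φt x₁) + φt ⁅x₀, x₁⁆ + ω (μ x₀) (μ x₁) := by
  have hρ1 : φ (ρ1 x₁ (φt x₀)) = ρ00 (μ x₁) (φt x₀) :=
    (LinearMap.congr_fun (h00μ x₁) (φt x₀)).symm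
  rw [heq4, hpeiffer, omegaOne, map_add, hρ1]
  abel

theorem epsilon_is_lie_hom_general
    (K : Type*) [Field K]
    (g h W V : Type*) [LieRing g] [LieAlgebra K g] [LieRing h] [LieAlgebra K h]
    [AddCommGroup W] [Module K W] [AddCommGroup V] [Module K V]
    (φ : W →ₗ[K] V)
    (μ : g →ₗ⁅K⁆ h) (L : h →ₗ⁅K⁆ Module.End K g)
    (hpeiffer : ∀ (x₀ x₁ : g), L (μ x₀) x₁ = ⁅x₀, x₁⁆)
    (ρ01 : h →ₗ⁅K⁆ Module.End K W) (ρ00 : h →ₗ⁅K⁆ Module.End K V)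
    (ρ1 : g →ₗ[K] V →ₗ[K] W)
    (hcompat : ∀ y : h, φ ∘ₗ ρ01 y = ρ00 y ∘ₗ φ)
    (h00μ : ∀ x : g, (ρ00 (μ x) : V →ₗ[K] V) = φ ∘ₗ ρ1 x)
    (ω : h →ₗ[K] h →ₗ[K] V) (α : h →ₗ[K] g →ₗ[K] W) (φt : g →ₗ[K] V)
    -- equation (iv)
    (heq4 : ∀ (y : h) (x : g),
      ω y (μ x) = φ (α y x) + ρ00 y (φt x) - φt (L y x)) :
    -- ε preserves brackets
    ∀ (x₀ x₁ : g) (w₀ w₁ : W),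
      ((μ ⁅x₀, x₁⁆,
        φ (ρ01 (μ x₀) w₁ - ρ01 (μ x₁) w₀ -
            omegaOne K g h W V μ ρ1 α φt x₀ x₁) + φt ⁅x₀, x₁⁆) : h × V) =
      (⁅μ x₀, μ x₁⁆,
        ρ00 (μ x₀) (φ w₁ + φt x₁) - ρ00 (μ x₁) (φ w₀ + φt x₀) -
          ω (μ x₀) (μ x₁)) := by
  intro x₀ x₁ w₀ w₁
  have hφρ : ∀ (y : h) (w : W), φ (ρ01 y w) = ρ00 y (φ w) :=
    fun y => LinearMap.congr_fun (hcompat y)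
  refine Prod.ext (μ.map_lie x₀ x₁) ?_
  simp only [map_sub, map_add, hφρ, map_omegaOne hpeiffer h00μ heq4]
  abel

/-- Given a 2-representation and cocycle data (ω, α, φ̃) satisfying equations
(i)–(vi), the map ε(x,w) = (μ x, φ w + φ̃ x) is a Lie algebra homomorphism
from 𝔤 ⊕^{ω₁} W to 𝔥 ⊕^ω V. -/
theorem epsilon_is_lie_hom
    (K : Type*) [Field K]
    (g h W V : Type*) [LieRing g] [LieAlgebra K g] [LieRing h] [LieAlgebra K h]
    [AddCommGroup W] [Module K W] [AddCommGroup V] [Module K V]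
    (φ : W →ₗ[K] V)
    (μ : g →ₗ⁅K⁆ h) (L : h →ₗ⁅K⁆ Module.End K g)
    (hder : ∀ (y : h) (x₁ x₂ : g), L y ⁅x₁, x₂⁆ = ⁅L y x₁, x₂⁆ + ⁅x₁, L y x₂⁆)
    (hequiv : ∀ (y : h) (x : g), μ (L y x) = ⁅y, μ x⁆)
    (hpeiffer : ∀ (x₀ x₁ : g), L (μ x₀) x₁ = ⁅x₀, x₁⁆)
    (ρ01 : h →ₗ⁅K⁆ Module.End K W) (ρ00 : h →ₗ⁅K⁆ Module.End K V)
    (ρ1 : g →ₗ[K] V →ₗ[K] W)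
    (hcompat : ∀ y : h, φ ∘ₗ ρ01 y = ρ00 y ∘ₗ φ)
    (hρ1br : ∀ x₀ x₁ : g,
      ρ1 ⁅x₀, x₁⁆ = ρ1 x₀ ∘ₗ (φ ∘ₗ ρ1 x₁) - ρ1 x₁ ∘ₗ (φ ∘ₗ ρ1 x₀))
    (h00μ : ∀ x : g, (ρ00 (μ x) : V →ₗ[K] V) = φ ∘ₗ ρ1 x)
    (h01μ : ∀ x : g, (ρ01 (μ x) : W →ₗ[K] W) = ρ1 x ∘ₗ φ)
    (hact : ∀ (y : h) (x : g),
      ρ1 (L y x) = ρ01 y ∘ₗ ρ1 x - ρ1 x ∘ₗ ρ00 y)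
    (ω : h →ₗ[K] h →ₗ[K] V) (α : h →ₗ[K] g →ₗ[K] W) (φt : g →ₗ[K] V)
    (hωskew : ∀ y₀ y₁ : h, ω y₀ y₁ = -ω y₁ y₀)
    -- equation (i)
    (heq1 : ∀ y₀ y₁ y₂ : h,
      (ρ00 y₀ (ω y₁ y₂) - ω ⁅y₀, y₁⁆ y₂) +
      (ρ00 y₁ (ω y₂ y₀) - ω ⁅y₁, y₂⁆ y₀) +
      (ρ00 y₂ (ω y₀ y₁) - ω ⁅y₂, y₀⁆ y₁) = 0)
    -- equation (ii)
    (heq2 : ∀ x₀ x₁ : g,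
      (ρ1 x₀ (φt x₁) + α (μ x₁) x₀) + (ρ1 x₁ (φt x₀) + α (μ x₀) x₁) = 0)
    -- equation (iii)
    (heq3 : ∀ x₀ x₁ x₂ : g,
      (ρ01 (μ x₀) (ρ1 x₂ (φt x₁) + α (μ x₂) x₁) -
        ρ1 x₂ (φt ⁅x₀, x₁⁆) - α (μ ⁅x₀, x₁⁆) x₂) +
      (ρ01 (μ x₁) (ρ1 x₀ (φt x₂) + α (μ x₀) x₂) -
        ρ1 x₀ (φt ⁅x₁, x₂⁆) - α (μ ⁅x₁, x₂⁆) x₀) +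
      (ρ01 (μ x₂) (ρ1 x₁ (φt x₀) + α (μ x₁) x₀) -
        ρ1 x₁ (φt ⁅x₂, x₀⁆) - α (μ ⁅x₂, x₀⁆) x₁) = 0)
    -- equation (iv)
    (heq4 : ∀ (y : h) (x : g),
      ω y (μ x) = φ (α y x) + ρ00 y (φt x) - φt (L y x))
    -- equation (v)
    (heq5 : ∀ (y₀ y₁ : h) (x : g),
      α ⁅y₀, y₁⁆ x - ρ1 x (ω y₀ y₁) =
        ρ01 y₀ (α y₁ x) - α y₁ (L y₀ x) -
          (ρ01 y₁ (α y₀ x) - α y₀ (L y₁ x)))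
    -- equation (vi)
    (heq6 : ∀ (y : h) (x₀ x₁ : g),
      ρ01 (μ x₀) (α y x₁) - ρ01 (μ x₁) (α y x₀) - α y ⁅x₀, x₁⁆ =
        ρ01 y (omegaOne K g h W V μ ρ1 α φt x₀ x₁) -
          (omegaOne K g h W V μ ρ1 α φt (L y x₀) x₁ -
            omegaOne K g h W V μ ρ1 α φt (L y x₁) x₀)) :
    -- ε preserves brackets
    ∀ (x₀ x₁ : g) (w₀ w₁ : W),
      ((μ ⁅x₀, x₁⁆,
        φ (ρ01 (μ x₀) w₁ - ρ01 (μ x₁) w₀ -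
            omegaOne K g h W V μ ρ1 α φt x₀ x₁) + φt ⁅x₀, x₁⁆) : h × V) =
      (⁅μ x₀, μ x₁⁆,
        ρ00 (μ x₀) (φ w₁ + φt x₁) - ρ00 (μ x₁) (φ w₀ + φt x₀) -
          ω (μ x₀) (μ x₁)) :=
  epsilon_is_lie_hom_general K g h W V φ μ L hpeiffer ρ01 ρ00 ρ1 hcompat h00μ ω α φt heq4
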